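/- arXiv:2303.06212 — 7 statements merged into one kernel-verified Lean document; each statement's English description precedes it below -/
import Mathlib

section
/- Let c be a binary supermodular cost function on a finite set O and let S ⊆ O. If A is a maximal (by inclusion) subset of S with c(A) = 0, then c(S) = |S \ A|. -/
def BinSupermodular {O : Type*} [DecidableEq O] (c : Finset O → ℤ) : Prop :=
  c ∅ = 0 ∧
  (∀ S : Finset O, ∀ o ∉ S, c (insert o S) - c S = 0 ∨ c (insert o S) - c S = 1) ∧
  (∀ S T : Finset O, S ⊆ T → ∀ o ∉ T, c (insert o S) - c S ≤ c (insert o T) - c T)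

theorem stmt2 {O : Type*} [DecidableEq O] [Fintype O] (c : Finset O → ℤ)
    (hc : BinSupermodular c) (S A : Finset O) (hAS : A ⊆ S) (hA0 : c A = 0)
    (hmax : ∀ o ∈ S \ A, c (insert o A) ≠ 0) :
    c S = (S \ A).card := by
  obtain ⟨h0, hbin, hsup⟩ := hc
  have key : ∀ B : Finset O, B ⊆ S \ A → c (A ∪ B) = B.card := by
    intro B
    induction B using Finset.induction_on with
    | empty => intro _; simpa using hA0
    | @insert o B hoB ih =>
      intro hBS
      have hB : B ⊆ S \ A := (Finset.subset_insert o B).trans hBS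
      have hoSA : o ∈ S \ A := hBS (Finset.mem_insert_self o B)
      have hoA : o ∉ A := (Finset.mem_sdiff.mp hoSA).2
      have honAB : o ∉ A ∪ B := by
        simp [Finset.mem_union, hoA, hoB]
      have h1 : c (insert o A) - c A = 1 := by
        rcases hbin A o hoA with h | h
        · exfalso; apply hmax o hoSA; linarith
        · exact h
      have hle : c (insert o A) - c A ≤ c (insert o (A ∪ B)) - c (A ∪ B) :=
        hsup A (A ∪ B) Finset.subset_union_left o honAB
      have hle2 : c (insert o (A ∪ B)) - c (A ∪ B) = 1 := by
        rcases hbin (A ∪ B) o honAB with h | h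
        · omega
        · exact h
      have : A ∪ insert o B = insert o (A ∪ B) := by
        ext x; simp [Finset.mem_union, Finset.mem_insert]
      rw [this, Finset.card_insert_of_notMem hoB]
      have := ih hB
      push_cast
      linarith
  have hS : A ∪ (S \ A) = S := Finset.union_sdiff_of_subset hAS
  have := key (S \ A) (le_refl _)
  rwa [hS] at this
end

section
/- Let c be a binary supermodular cost function on a finite set O. Then every subset S ⊆ O can be decomposed into disjoint sets S⁰ and S¹ with S⁰ ∪ S¹ = S, c(S⁰) = 0, and c(S) = |S¹|. -/
theorem stmt3 {O : Type*} [DecidableEq O] [Fintype O] (c : Finset O → ℤ)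
    (hc : BinSupermodular c) (S : Finset O) :
    ∃ S0 S1 : Finset O, Disjoint S0 S1 ∧ S0 ∪ S1 = S ∧ c S0 = 0 ∧ c S = S1.card := by
  obtain ⟨h0, hmarg, hsup⟩ := hc
  induction S using Finset.induction_on with
  | empty => exact ⟨∅, ∅, Finset.disjoint_empty_left _, by simp, h0, by simp [h0]⟩
  | @insert o S ho ih =>
    obtain ⟨S0, S1, hd, hu, hc0, hcS⟩ := ih
    have hS0 : S0 ⊆ S := hu ▸ Finset.subset_union_left
    have hoS0 : o ∉ S0 := fun h => ho (hS0 h)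
    rcases hmarg S o ho with h | h
    · refine ⟨insert o S0, S1, ?_, ?_, ?_, ?_⟩
      · refine Finset.disjoint_insert_left.mpr ⟨fun h1 => ho ?_, hd⟩
        exact hu ▸ Finset.mem_union_right _ h1
      · rw [Finset.insert_union, hu]
      · have hle := hsup S0 S hS0 o ho
        rcases hmarg S0 o hoS0 with h2 | h2 <;> omega
      · rw [show c (insert o S) = c S by omega, hcS]
    · refine ⟨S0, insert o S1, ?_, ?_, hc0, ?_⟩
      · refine Finset.disjoint_insert_right.mpr ⟨fun h1 => ho (hS0 h1), hd⟩
      · rw [Finset.union_insert, hu]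
      · have hoS1 : o ∉ S1 := fun h1 => ho (hu ▸ Finset.mem_union_right _ h1)
        rw [Finset.card_insert_of_notMem hoS1]
        push_cast
        omega
end

section
/- Let x ∈ ℤ^n with x ≤ 0 componentwise, let w ∈ ℝ^n be strictly positive, and let i, j be distinct indices with x_i / w_i = x_j / w_j and w_i > w_j. Let y be x with x_i decreased by 1 and z be x with x_j decreased by 1. Then (y_i)/w_i > (z_j)/w_j and (y_j)/w_j = (z_i)/w_i, and consequently the ascending sorted weighted utility vector of y lexicographically dominates that of z. -/
def LexDom {n : ℕ} (y z : Fin n → ℝ) : Prop :=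
  ∃ k : Fin n, (∀ j, j < k → y j = z j) ∧ y k > z k

noncomputable def sortVec {n : ℕ} (v : Fin n → ℝ) : Fin n → ℝ := v ∘ Tuple.sort v

lemma sortVec_perm {n : ℕ} (v : Fin n → ℝ) (σ : Equiv.Perm (Fin n)) :
    sortVec (v ∘ σ) = sortVec v := by
  unfold sortVec
  exact Tuple.comp_perm_comp_sort_eq_comp_sort

lemma sortVec_mono {n : ℕ} (u v : Fin n → ℝ) (h : ∀ k, u k ≤ v k) (k : Fin n) :
    sortVec u k ≤ sortVec v k := by
  classical
  set A : Finset (Fin n) := (Finset.Iic k).image (Tuple.sort v) with hA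
  set B : Finset (Fin n) := (Finset.Iio k).image (Tuple.sort u) with hB
  have hcardA : A.card = k.1 + 1 := by
    rw [hA, Finset.card_image_of_injective _ (Tuple.sort v).injective, Fin.card_Iic]
  have hcardB : B.card = k.1 := by
    rw [hB, Finset.card_image_of_injective _ (Tuple.sort u).injective, Fin.card_Iio]
  have hne : (A \ B).Nonempty := by
    rw [← Finset.card_pos]
    have := Finset.le_card_sdiff B A
    omega
  obtain ⟨a, ha⟩ := hne
  obtain ⟨haA, haB⟩ := Finset.mem_sdiff.mp ha
  obtain ⟨m, hm, hma⟩ := Finset.mem_image.mp haA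
  have hva : v a ≤ sortVec v k := by
    rw [← hma]
    exact Tuple.monotone_sort v (Finset.mem_Iic.mp hm)
  have hua : sortVec u k ≤ u a := by
    set m' := (Tuple.sort u).symm a with hm'
    have h1 : a = Tuple.sort u m' := by simp [hm']
    have h2 : k ≤ m' := by
      by_contra hlt
      push_neg at hlt
      exact haB (Finset.mem_image.mpr ⟨m', Finset.mem_Iio.mpr hlt, h1.symm⟩)
    calc sortVec u k ≤ sortVec u m' := Tuple.monotone_sort u h2
      _ = u a := by rw [h1]; rfl
  exact hua.trans ((h a).trans hva)

lemma sortVec_sum {n : ℕ} (v : Fin n → ℝ) :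
    ∑ k, sortVec v k = ∑ k, v k := Equiv.sum_comp (Tuple.sort v) v

theorem stmt7 {n : ℕ} (x : Fin n → ℤ) (hx : ∀ h, x h ≤ 0)
    (w : Fin n → ℝ) (hw : ∀ h, 0 < w h) (i j : Fin n) (hij : i ≠ j)
    (heq : (x i : ℝ) / w i = (x j : ℝ) / w j) (hwij : w i > w j)
    (y z : Fin n → ℤ)
    (hy : y = Function.update x i (x i - 1)) (hz : z = Function.update x j (x j - 1)) :
    (y i : ℝ) / w i > (z j : ℝ) / w j ∧ (y j : ℝ) / w j = (z i : ℝ) / w i ∧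
    LexDom (sortVec fun h => (y h : ℝ) / w h) (sortVec fun h => (z h : ℝ) / w h) := by
  classical
  have hyi : y i = x i - 1 := by simp [hy]
  have hyj : y j = x j := by simp [hy, (Ne.symm hij)]
  have hzj : z j = x j - 1 := by simp [hz]
  have hzi : z i = x i := by simp [hz, hij]
  have hyh : ∀ h, h ≠ i → y h = x h := by intro h hh; simp [hy, hh]
  have hzh : ∀ h, h ≠ j → z h = x h := by intro h hh; simp [hz, hh]
  set Y : Fin n → ℝ := fun h => (y h : ℝ) / w h with hY
  set Z : Fin n → ℝ := fun h => (z h : ℝ) / w h with hZ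
  have hwi := hw i
  have hwj := hw j
  have hclaim1 : Y i > Z j := by
    have : Y i = (x i : ℝ) / w i - 1 / w i := by
      simp [hY, hyi, sub_div]
    have h2 : Z j = (x j : ℝ) / w j - 1 / w j := by
      simp [hZ, hzj, sub_div]
    rw [this, h2, ← heq]
    have : 1 / w i < 1 / w j := one_div_lt_one_div_of_lt hwj hwij
    linarith
  have hclaim2 : Y j = Z i := by
    simp [hY, hZ, hyj, hzi, heq]
  refine ⟨hclaim1, hclaim2, ?_⟩
  -- lexicographic dominance
  set σ := Equiv.swap i j with hσ
  have hle : ∀ h, Z h ≤ (Y ∘ σ) h := by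
    intro h
    rcases eq_or_ne h i with rfl | hhi
    · simp only [Function.comp_apply, hσ, Equiv.swap_apply_left]
      exact le_of_eq hclaim2.symm
    rcases eq_or_ne h j with rfl | hhj
    · simp only [Function.comp_apply, hσ, Equiv.swap_apply_right]
      exact le_of_lt hclaim1
    · simp only [Function.comp_apply, hσ, Equiv.swap_apply_of_ne_of_ne hhi hhj]
      rw [hY, hZ]
      simp [hyh h hhi, hzh h hhj]
  have hpt : ∀ k, sortVec Z k ≤ sortVec Y k := by
    intro k
    have := sortVec_mono Z (Y ∘ σ) hle k
    rwa [sortVec_perm Y σ] at this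
  have hsum : ∑ k, sortVec Z k < ∑ k, sortVec Y k := by
    rw [sortVec_sum, sortVec_sum, ← Equiv.sum_comp σ Y]
    refine Finset.sum_lt_sum (fun h _ => hle h) ⟨j, Finset.mem_univ j, ?_⟩
    simp only [Function.comp_apply, hσ, Equiv.swap_apply_right]
    exact hclaim1
  have hex : ∃ k : Fin n, sortVec Z k < sortVec Y k := by
    by_contra hc
    push_neg at hc
    have : ∑ k, sortVec Y k ≤ ∑ k, sortVec Z k :=
      Finset.sum_le_sum fun k _ => hc k
    linarith
  -- take the least such k
  set S : Finset (Fin n) := Finset.univ.filter (fun k => sortVec Z k < sortVec Y k) with hS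
  have hSne : S.Nonempty := by
    obtain ⟨k, hk⟩ := hex
    exact ⟨k, by simp [hS, hk]⟩
  set k := S.min' hSne with hk
  have hkS : k ∈ S := S.min'_mem hSne
  have hklt : sortVec Z k < sortVec Y k := (Finset.mem_filter.mp hkS).2
  refine ⟨k, ?_, hklt⟩
  intro m hm
  have hmS : m ∉ S := by
    intro hmem
    exact absurd (S.min'_le m hmem) (not_le.mpr hm)
  have : ¬ sortVec Z m < sortVec Y m := fun hlt => hmS (by simp [hS, hlt])
  exact le_antisymm (not_lt.mp this) (hpt m)
end

section
/- Let u, v ∈ ℝ^n differ in exactly two coordinates i ≠ j, with u_i > v_j, u_j = v_i, and suppose additionally u_i > u_j (equivalently, the larger new value exceeds the shared value). If min(u_i, u_j) > min(v_i, v_j) or (the multiset {u_i, u_j} pointwise dominates {v_i, v_j} sorted ascending with strict inequality somewhere), then the ascending sort of u lexicographically dominates the ascending sort of v. -/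
lemma sortVec_mono_s12 {n : ℕ} (v : Fin n → ℝ) : Monotone (sortVec v) :=
  Tuple.monotone_sort v

lemma sortVec_le {n : ℕ} (u v : Fin n → ℝ) (σ : Equiv.Perm (Fin n))
    (h : ∀ k, v k ≤ u (σ k)) : ∀ k, sortVec v k ≤ sortVec u k := by
  intro k
  by_contra hlt
  push_neg at hlt
  set f : Fin n → Fin n := fun m => (Tuple.sort v).symm (σ.symm (Tuple.sort u m)) with hf
  have hinj : Function.Injective f := by
    intro a b hab
    simp only [hf, EmbeddingLike.apply_eq_iff_eq] at hab
    exact hab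
  have hmap : ∀ m ∈ Finset.Iic k, f m ∈ Finset.Iio k := by
    intro m hm
    simp only [Finset.mem_Iic] at hm
    have h1 : u (Tuple.sort u m) ≤ sortVec u k := sortVec_mono_s12 u hm
    have h2 : v (σ.symm (Tuple.sort u m)) ≤ u (Tuple.sort u m) := by
      have := h (σ.symm (Tuple.sort u m)); simpa using this
    have h3 : sortVec v (f m) < sortVec v k := by
      have heq : sortVec v (f m) = v (σ.symm (Tuple.sort u m)) := by
        simp [sortVec, hf]
      rw [heq]; exact lt_of_le_of_lt (h2.trans h1) hlt
    simp only [Finset.mem_Iio]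
    by_contra hk
    push_neg at hk
    exact absurd (sortVec_mono_s12 v hk) (not_le.2 h3)
  have hcard := Finset.card_le_card_of_injOn f hmap hinj.injOn
  rw [Fin.card_Iic, Fin.card_Iio] at hcard
  omega

theorem stmt12 {n : ℕ} (u v : Fin n → ℝ) (i j : Fin n) (hij : i ≠ j)
    (hdiff : ∀ h, h ≠ i → h ≠ j → u h = v h)
    (h1 : u i > v j) (h2 : u j = v i) (h3 : u i > u j)
    (hdom : min (u i) (u j) > min (v i) (v j) ∨
      (min (u i) (u j) ≥ min (v i) (v j) ∧ max (u i) (u j) ≥ max (v i) (v j) ∧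
        (min (u i) (u j) > min (v i) (v j) ∨ max (u i) (u j) > max (v i) (v j)))) :
    LexDom (sortVec u) (sortVec v) := by
  set σ : Equiv.Perm (Fin n) := Equiv.swap i j with hσ
  have hperm : ∀ k, v k ≤ u (σ k) := by
    intro k
    rcases eq_or_ne k i with rfl | hki
    · simp [hσ, Equiv.swap_apply_left, h2.symm.le]
    rcases eq_or_ne k j with rfl | hkj
    · simp [hσ, Equiv.swap_apply_right, h1.le]
    · rw [hσ, Equiv.swap_apply_of_ne_of_ne hki hkj, hdiff k hki hkj]
  have hle : ∀ k, sortVec v k ≤ sortVec u k := sortVec_le u v σ hperm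
  -- strict sum inequality
  have hsumlt : ∑ k, v k < ∑ k, u k := by
    have : ∑ k, u (σ k) = ∑ k, u k := Equiv.sum_comp σ u
    rw [← this]
    refine Finset.sum_lt_sum (fun k _ => hperm k) ⟨j, Finset.mem_univ j, ?_⟩
    simpa [hσ, Equiv.swap_apply_right] using h1
  have hsortsum : ∑ k, sortVec v k < ∑ k, sortVec u k := by
    have h1' : ∑ k, sortVec u k = ∑ k, u k := Equiv.sum_comp (Tuple.sort u) u
    have h2' : ∑ k, sortVec v k = ∑ k, v k := Equiv.sum_comp (Tuple.sort v) v
    rw [h1', h2']; exact hsumlt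
  have hex : ∃ k, sortVec v k < sortVec u k := by
    by_contra hc
    push_neg at hc
    have : ∀ k, sortVec u k = sortVec v k := fun k => le_antisymm (hc k) (hle k)
    rw [Finset.sum_congr rfl (fun k _ => this k)] at hsortsum
    exact lt_irrefl _ hsortsum
  obtain ⟨k0, hk0⟩ := hex
  obtain ⟨k, hk, hkmin⟩ := Finset.exists_min_image
    (Finset.univ.filter fun k => sortVec v k < sortVec u k) id
    ⟨k0, by simp [hk0]⟩
  simp only [Finset.mem_filter] at hk
  refine ⟨k, fun m hm => ?_, hk.2⟩
  refine le_antisymm ?_ (hle m)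
  by_contra hc
  push_neg at hc
  have : k ≤ m := hkmin m (by simp [hc])
  exact absurd hm (not_lt.2 this)
end

section
/- Let all agents have binary supermodular cost functions on finite chore set O, and suppose X⁰ is a maximum-size partial allocation with total cost 0 (i.e., c_i(X⁰_i) = 0 for all i and Σ_i |X⁰_i| is maximal among all such partial allocations). Let X¹ be any assignment of the remaining chores O \ ∪_i X⁰_i to agents (each remaining chore assigned to exactly one agent, X¹_i being the set of chores assigned to agent i) such that c_i(X⁰_i ∪ X¹_i) = |X¹_i| for all i. Then the complete allocation (X⁰_i ∪ X¹_i)_i is utilitarian-welfare-maximizing, i.e., it minimizes Σ_i c_i(X_i) over all complete allocations. -/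
lemma binsup_zero_sub {O : Type*} [DecidableEq O] (c : Finset O → ℤ)
    (hc : BinSupermodular c) (S : Finset O) :
    ∃ Z ⊆ S, c Z = 0 ∧ (S.card : ℤ) - Z.card ≤ c S := by
  obtain ⟨h0, hbin, hsup⟩ := hc
  induction S using Finset.induction_on with
  | empty => exact ⟨∅, le_refl _, h0, by simp [h0]⟩
  | @insert o T ho ih =>
    obtain ⟨Z, hZT, hZ0, hZc⟩ := ih
    rcases hbin T o ho with h | h
    · refine ⟨insert o Z, Finset.insert_subset_insert o hZT, ?_, ?_⟩
      · have := hsup Z T hZT o ho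
        rw [h, hZ0] at this
        have hge : 0 ≤ c (insert o Z) - c Z := by
          rcases hbin Z o (fun hm => ho (hZT hm)) with h' | h' <;> omega
        rw [hZ0] at hge; omega
      · rw [Finset.card_insert_of_notMem ho,
          Finset.card_insert_of_notMem (fun hm => ho (hZT hm))]
        push_cast; omega
    · refine ⟨Z, hZT.trans (Finset.subset_insert o T), hZ0, ?_⟩
      rw [Finset.card_insert_of_notMem ho]; push_cast; omega

theorem stmt14 {O : Type*} [DecidableEq O] [Fintype O] {n : ℕ}
    (c : Fin n → Finset O → ℤ) (hc : ∀ i, BinSupermodular (c i))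
    (X0 : Fin n → Finset O) (hX0disj : ∀ i j, i ≠ j → Disjoint (X0 i) (X0 j))
    (hX0zero : ∀ i, c i (X0 i) = 0)
    (hX0max : ∀ Z : Fin n → Finset O, (∀ i j, i ≠ j → Disjoint (Z i) (Z j)) →
      (∀ i, c i (Z i) = 0) → ∑ i, (Z i).card ≤ ∑ i, (X0 i).card)
    (X1 : Fin n → Finset O) (hX1disj : ∀ i j, i ≠ j → Disjoint (X1 i) (X1 j))
    (hX1cover : Finset.univ.biUnion X1 = Finset.univ \ Finset.univ.biUnion X0)
    (hXcost : ∀ i, c i (X0 i ∪ X1 i) = (X1 i).card) :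
    ∀ Y : Fin n → Finset O, (∀ i j, i ≠ j → Disjoint (Y i) (Y j)) →
      Finset.univ.biUnion Y = Finset.univ →
      ∑ i, c i (X0 i ∪ X1 i) ≤ ∑ i, c i (Y i) := by
  intro Y hYdisj hYcover
  -- choose zero subsets of Y
  choose Z hZsub hZzero hZcost using fun i => binsup_zero_sub (c i) (hc i) (Y i)
  have hZdisj : ∀ i j, i ≠ j → Disjoint (Z i) (Z j) := fun i j hij =>
    ((hYdisj i j hij).mono (hZsub i) (hZsub j))
  have hZle : ∑ i, (Z i).card ≤ ∑ i, (X0 i).card := hX0max Z hZdisj hZzero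
  -- card computations
  have cardbi : ∀ (W : Fin n → Finset O), (∀ i j, i ≠ j → Disjoint (W i) (W j)) →
      (Finset.univ.biUnion W).card = ∑ i, (W i).card := by
    intro W hW
    exact Finset.card_biUnion (fun i _ j _ hij => hW i j hij)
  have hY : ∑ i, (Y i).card = Fintype.card O := by
    rw [← cardbi Y hYdisj, hYcover, Finset.card_univ]
  have hX1 : ∑ i, (X1 i).card = Fintype.card O - ∑ i, (X0 i).card := by
    rw [← cardbi X1 hX1disj, hX1cover, Finset.card_sdiff_of_subset (Finset.subset_univ _),
      Finset.card_univ, cardbi X0 hX0disj]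
  have hX0le : ∑ i, (X0 i).card ≤ Fintype.card O := by
    rw [← cardbi X0 hX0disj]
    exact Finset.card_le_card (Finset.subset_univ _) |>.trans (le_of_eq Finset.card_univ)
  calc ∑ i, c i (X0 i ∪ X1 i) = ∑ i, ((X1 i).card : ℤ) := by
        exact Finset.sum_congr rfl (fun i _ => hXcost i)
    _ ≤ ∑ i, ((Y i).card - (Z i).card : ℤ) := by
        push_cast [Finset.sum_sub_distrib]
        have h1 : (∑ i, ((X1 i).card : ℤ)) + ∑ i, ((X0 i).card : ℤ) = (Fintype.card O : ℤ) := by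
          have hn : ∑ i, (X1 i).card + ∑ i, (X0 i).card = Fintype.card O := by omega
          exact_mod_cast hn
        have h2 : (∑ i, ((Y i).card : ℤ)) = (Fintype.card O : ℤ) := by exact_mod_cast hY
        have h3 : (∑ i, ((Z i).card : ℤ)) ≤ ∑ i, ((X0 i).card : ℤ) := by exact_mod_cast hZle
        omega
    _ ≤ ∑ i, c i (Y i) := Finset.sum_le_sum (fun i _ => hZcost i)
end

section
/- Let c be a binary supermodular cost function on finite set O and let A, S ⊆ O with A ⊆ S and c(A) = 0. If c(S) < |S \ A|, then there exists o ∈ S \ A with c(A ∪ {o}) = 0. -/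
theorem stmt17 {O : Type*} [DecidableEq O] [Fintype O] (c : Finset O → ℤ)
    (hc : BinSupermodular c) (A S : Finset O) (hAS : A ⊆ S) (hA0 : c A = 0)
    (hlt : c S < (S \ A).card) :
    ∃ o ∈ S \ A, c (insert o A) = 0 := by
  by_contra h
  push_neg at h
  obtain ⟨h0, hbin, hsup⟩ := hc
  -- every o ∈ S \ A has marginal 1 at A
  have hmarg : ∀ o ∈ S \ A, c (insert o A) - c A = 1 := by
    intro o ho
    have hoA : o ∉ A := (Finset.mem_sdiff.mp ho).2
    rcases hbin A o hoA with h1 | h1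
    · exfalso; exact h o ho (by linarith)
    · exact h1
  -- claim: for all T with A ⊆ T ⊆ S, (T \ A).card ≤ c T
  have key : ∀ n : ℕ, ∀ T : Finset O, (T \ A).card = n → A ⊆ T → T ⊆ S →
      ((T \ A).card : ℤ) ≤ c T := by
    intro n
    induction n with
    | zero =>
      intro T hcard hAT hTS
      have : T \ A = ∅ := Finset.card_eq_zero.mp hcard
      have : T = A := Finset.Subset.antisymm
        (fun x hx => by
          by_contra hxA
          exact absurd (Finset.mem_sdiff.mpr ⟨hx, hxA⟩) (by simp [this]))
        hAT
      simp [this, hA0]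
    | succ n ih =>
      intro T hcard hAT hTS
      obtain ⟨o, ho⟩ := Finset.card_pos.mp (by omega : 0 < (T \ A).card)
      have hoT : o ∈ T := (Finset.mem_sdiff.mp ho).1
      have hoA : o ∉ A := (Finset.mem_sdiff.mp ho).2
      set T' := T.erase o with hT'
      have hoT' : o ∉ T' := Finset.notMem_erase o T
      have hAT' : A ⊆ T' := fun x hx =>
        Finset.mem_erase.mpr ⟨fun he => hoA (he ▸ hx), hAT hx⟩
      have hT'S : T' ⊆ S := (Finset.erase_subset o T).trans hTS
      have hins : insert o T' = T := Finset.insert_erase hoT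
      have hcard' : (T' \ A).card = n := by
        have : T' \ A = (T \ A).erase o := by
          ext x; simp [hT', Finset.mem_erase, Finset.mem_sdiff]; tauto
        rw [this, Finset.card_erase_of_mem ho, hcard]; omega
      have hih := ih T' hcard' hAT' hT'S
      have hoS : o ∈ S \ A := Finset.mem_sdiff.mpr ⟨hTS hoT, hoA⟩
      have h1 := hmarg o hoS
      have h2 := hsup A T' hAT' o hoT'
      rw [hins] at h2
      have : (T \ A).card = n + 1 := hcard
      push_cast [this]
      rw [hcard'] at hih
      linarith
  have := key (S \ A).card S rfl hAS (Finset.Subset.refl S)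
  linarith
end

section
/- Let u ∈ ℝ^n and let y, z be obtained from u by y = u except y_i = u_i − δ, and z = u except z_j = u_j − δ, for δ > 0 and i ≠ j. If u_i > u_j, then the ascending sorts satisfy sort(y) ⪰_lex sort(z), with strict dominance sort(y) ≻_lex sort(z) when u_i − δ > u_j − δ. -/
/-- multiplicity of value `r` in vector `v` -/
noncomputable def mult {n : ℕ} (v : Fin n → ℝ) (r : ℝ) : ℕ :=
  (Finset.univ.filter (fun m => v m = r)).card

lemma mult_perm {n : ℕ} (v : Fin n → ℝ) (σ : Equiv.Perm (Fin n)) (r : ℝ) :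
    mult (v ∘ σ) r = mult v r := by
  unfold mult
  have : (Finset.univ.filter fun m => (v ∘ σ) m = r)
      = (Finset.univ.filter fun m => v m = r).image σ.symm := by
    ext m
    simp [Equiv.eq_symm_apply, eq_comm (a := m)]
    constructor
    · intro hm; exact ⟨σ m, hm, by simp⟩
    · rintro ⟨x, hx, rfl⟩; simpa using hx
  rw [this, Finset.card_image_of_injective _ σ.symm.injective]

lemma mult_sortVec {n : ℕ} (v : Fin n → ℝ) (r : ℝ) :
    mult (sortVec v) r = mult v r := mult_perm v _ r

theorem stmt19 {n : ℕ} (u : Fin n → ℝ) (δ : ℝ) (hδ : 0 < δ)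
    (i j : Fin n) (hij : i ≠ j) (h : u i > u j)
    (y z : Fin n → ℝ)
    (hy : y = Function.update u i (u i - δ)) (hz : z = Function.update u j (u j - δ)) :
    LexDom (sortVec y) (sortVec z) := by
  classical
  set a := u i with ha
  set b := u j with hb
  have hyi : y i = a - δ := by simp [hy]
  have hyj : y j = b := by simp [hy, Function.update_of_ne (Ne.symm hij), hb]
  have hzi : z i = a := by simp [hz, Function.update_of_ne hij, ha]
  have hzj : z j = b - δ := by simp [hz]
  have hyz : ∀ m, m ≠ i → m ≠ j → y m = z m := by
    intro m hmi hmj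
    simp [hy, hz, Function.update_of_ne hmi, Function.update_of_ne hmj]
  -- key multiplicity identity
  have key : ∀ r, mult y r + ((if a = r then 1 else 0) + (if b - δ = r then 1 else 0))
      = mult z r + ((if a - δ = r then 1 else 0) + (if b = r then 1 else 0)) := by
    intro r
    have hsplit : ∀ v : Fin n → ℝ, mult v r
        = ∑ m ∈ ({i, j} : Finset (Fin n))ᶜ, (if v m = r then 1 else 0)
          + ((if v i = r then 1 else 0) + (if v j = r then 1 else 0)) := by
      intro v
      have : mult v r = ∑ m, if v m = r then 1 else 0 := by
        unfold mult
        rw [Finset.card_filter]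
      rw [this, ← Finset.sum_compl_add_sum ({i, j} : Finset (Fin n))]
      rw [Finset.sum_pair hij]
    have hc : ∑ m ∈ ({i, j} : Finset (Fin n))ᶜ, (if y m = r then 1 else 0)
        = ∑ m ∈ ({i, j} : Finset (Fin n))ᶜ, (if z m = r then 1 else 0) := by
      apply Finset.sum_congr rfl
      intro m hm
      simp only [Finset.mem_compl, Finset.mem_insert, Finset.mem_singleton, not_or] at hm
      rw [hyz m hm.1 hm.2]
    rw [hsplit y, hsplit z, hc, hyi, hyj, hzi, hzj]
    ring
  have hab : b - δ < a - δ := by linarith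
  have hbb : b - δ < b := by linarith
  have hba : b - δ < a := by linarith
  -- mult z (b-δ) = mult y (b-δ) + 1
  have fact1 : mult z (b - δ) = mult y (b - δ) + 1 := by
    have := key (b - δ)
    rw [if_neg (show ¬(a = b - δ) by linarith), if_pos (show b - δ = b - δ from rfl),
        if_neg (show ¬(a - δ = b - δ) by linarith),
        if_neg (show ¬(b = b - δ) by linarith)] at this
    omega
  -- if mult y r > mult z r then r = a - δ ∨ r = b
  have fact2 : ∀ r, mult z r < mult y r → r = a - δ ∨ r = b := by
    intro r hr
    have := key r
    by_contra hcon
    push_neg at hcon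
    rw [if_neg (show ¬(a - δ = r) from fun e => hcon.1 e.symm),
        if_neg (show ¬(b = r) from fun e => hcon.2 e.symm)] at this
    have h1 : (0:ℕ) ≤ if a = r then 1 else 0 := Nat.zero_le _
    have h2 : (0:ℕ) ≤ if b - δ = r then 1 else 0 := Nat.zero_le _
    omega
  set s := sortVec y with hs
  set t := sortVec z with ht
  have hms : Monotone s := Tuple.monotone_sort y
  have hmt : Monotone t := Tuple.monotone_sort z
  have hmulty : ∀ r, mult s r = mult y r := mult_sortVec y
  have hmultz : ∀ r, mult t r = mult z r := mult_sortVec z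
  set D := Finset.univ.filter (fun m => s m ≠ t m) with hD
  have hne : D.Nonempty := by
    by_contra hemp
    rw [Finset.not_nonempty_iff_eq_empty] at hemp
    have hst : s = t := by
      funext m
      by_contra hm
      have : m ∈ D := by simp [hD, hm]
      simp [hemp] at this
    have : mult y (b - δ) = mult z (b - δ) := by
      rw [← hmulty, ← hmultz, hst]
    omega
  set k := D.min' hne with hk
  have hkD : k ∈ D := D.min'_mem hne
  have hkne : s k ≠ t k := by simpa [hD] using hkD
  have hmin : ∀ m, m < k → s m = t m := by
    intro m hm
    by_contra hmne
    have : m ∈ D := by simp [hD, hmne]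
    exact absurd (D.min'_le m this) (not_le.mpr hm)
  rcases lt_trichotomy (s k) (t k) with hlt | heq | hgt
  · -- contradiction case
    exfalso
    set c := s k with hc
    -- mult z c < mult y c
    have hsub : (Finset.univ.filter fun m => t m = c)
        ⊂ (Finset.univ.filter fun m => s m = c) := by
      constructor
      · intro m hm
        simp only [Finset.mem_filter, Finset.mem_univ, true_and] at hm ⊢
        have hmk : m < k := by
          by_contra hge
          push_neg at hge
          have : t k ≤ t m := hmt hge
          rw [hm] at this
          exact absurd this (not_le.mpr hlt)
        rw [← hmin m hmk] at hm
        exact hm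
      · intro hcont
        have : k ∈ Finset.univ.filter fun m => t m = c := hcont (by simp [hc])
        simp only [Finset.mem_filter, Finset.mem_univ, true_and] at this
        exact (ne_of_lt hlt) this.symm
    have hcard : mult z c < mult y c := by
      rw [← hmulty, ← hmultz]
      exact Finset.card_lt_card hsub
    have hcval : c = a - δ ∨ c = b := fact2 c hcard
    have hcgt : b - δ < c := by rcases hcval with h1 | h1 <;> linarith
    -- but mult y (b - δ) = mult z (b - δ)
    have : mult y (b - δ) = mult z (b - δ) := by
      rw [← hmulty, ← hmultz]
      unfold mult
      congr 1
      ext m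
      simp only [Finset.mem_filter, Finset.mem_univ, true_and]
      constructor
      · intro hm
        have hmk : m < k := by
          by_contra hge
          push_neg at hge
          have : s k ≤ s m := hms hge
          rw [hm] at this
          exact absurd this (not_le.mpr hcgt)
        rw [← hmin m hmk]; exact hm
      · intro hm
        have hmk : m < k := by
          by_contra hge
          push_neg at hge
          have h1 : t k ≤ t m := hmt hge
          rw [hm] at h1
          have : t k < c := lt_of_le_of_lt h1 hcgt
          exact absurd (lt_trans this hlt) (lt_irrefl _)
        rw [hmin m hmk]; exact hm
    omega
  · exact absurd heq hkne
  · exact ⟨k, hmin, hgt⟩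
end
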